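/- arXiv:2410.11613 — 3 statements merged into one kernel-verified Lean document; each statement's English description precedes it below -/
import Mathlib

section
/- Let B ∈ ℝ^{n×n} and let ω be a random vector in ℝ^n with i.i.d. standard Gaussian N(0,1) entries. Then for every index i, the i-th entry of the single-sample estimation error e := ω ⊙ (Bω) − diag(B) has mean zero and satisfies E[(e_i)²] = B_{ii}² + ‖[B]_{i,:}‖₂², where ‖[B]_{i,:}‖₂ is the Euclidean norm of the i-th row of B. -/
/-!
Expanding `ω i * (B *ᵥ ω) i = ∑ j, B i j * (ω i * ω j)`, both moments of the error become
combinations of expectations of monomials in the i.i.d. coordinates, and these factor over the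
product measure into one-dimensional moments `mₖ = ∫ x ^ k`. For any law with `m₁ = 0`, `m₂ = 1`
one gets `E[ω i * ω j] = δᵢⱼ` and `E[ω i ^ 2 * ω j * ω k] = δⱼₖ (1 + (m₄ - 1) δᵢⱼ)`, hence
`E[e i] = 0` and `E[e i ^ 2] = ∑ j, B i j ^ 2 + (m₄ - 2) * B i i ^ 2`. For the standard Gaussian
`m₄ = 3`, read off from the Gamma integral.
-/

open MeasureTheory ProbabilityTheory Finset Real
open scoped Nat

theorem integral_even_pow_gaussianReal (k : ℕ) :
    ∫ x, x ^ (2 * k) ∂gaussianReal 0 1 = ((2 * k - 1)‼ : ℝ) := by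
  rw [integral_gaussianReal_eq_integral_smul one_ne_zero]
  simp only [gaussianPDFReal, smul_eq_mul, NNReal.coe_one, mul_one, sub_zero]
  simp_rw [mul_assoc, integral_const_mul]
  have hsymm : ∫ x : ℝ, rexp (-x ^ 2 / 2) * x ^ (2 * k)
      = 2 * ∫ x in Set.Ioi (0 : ℝ), x ^ ((2 * k : ℕ) : ℝ) * rexp (-(1 / 2) * x ^ (2 : ℝ)) := by
    rw [← integral_comp_abs]
    congr 1 with x
    simp only [rpow_natCast, rpow_two, pow_mul, sq_abs]
    ring_nf
  have hpow : (1 / 2 : ℝ) ^ (-((2 * k : ℕ) + 1 : ℝ) / 2) = 2 ^ k * √2 := by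
    rw [neg_div, one_div, inv_rpow zero_le_two, rpow_neg zero_le_two, inv_inv, sqrt_eq_rpow,
      ← rpow_natCast, ← rpow_add two_pos]
    push_cast
    ring_nf
  rw [hsymm, integral_rpow_mul_exp_neg_mul_rpow two_pos
    (neg_one_lt_zero.trans_le (Nat.cast_nonneg _)) one_half_pos, hpow]
  push_cast
  rw [show ((2 * k + 1 : ℝ)) / 2 = k + 1 / 2 by ring, Gamma_nat_add_half, sqrt_mul zero_le_two]
  field_simp

theorem Multiset.prod_map_eq_prod_pow_count {ι M : Type*} [Fintype ι] [DecidableEq ι]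
    [CommMonoid M] (s : Multiset ι) (f : ι → M) :
    (s.map f).prod = ∏ l, f l ^ s.count l := by
  rw [Finset.prod_multiset_map_count]
  exact prod_subset (subset_univ _) fun l _ hl => by
    rw [Multiset.count_eq_zero.mpr (by simpa using hl), pow_zero]

lemma integrable_pow_of_memLp_id {μ : Measure ℝ} [IsFiniteMeasure μ] {p q : ℕ}
    (hμ : MemLp id q μ) (hpq : p ≤ q) : Integrable (fun x : ℝ => x ^ p) μ := by
  have h := (hμ.mono_exponent (by exact_mod_cast hpq : (p : ENNReal) ≤ q)).integrable_norm_pow'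
  exact (integrable_norm_iff (by fun_prop)).mp (by simpa only [id, norm_pow] using h)

section ProductMoments

variable {ι : Type*} [Fintype ι] [DecidableEq ι] {μ : Measure ℝ}

lemma integral_pi_prod_map [SigmaFinite μ] (s : Multiset ι) :
    ∫ ω, (s.map ω).prod ∂Measure.pi (fun _ => μ) = ∏ l, ∫ x, x ^ s.count l ∂μ := by
  simp_rw [Multiset.prod_map_eq_prod_pow_count]
  exact integral_fintype_prod_eq_prod fun l x => x ^ s.count l

lemma integrable_pi_prod_map [SigmaFinite μ] {s : Multiset ι}
    (hs : ∀ l, Integrable (fun x : ℝ => x ^ s.count l) μ) :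
    Integrable (fun ω : ι → ℝ => (s.map ω).prod) (Measure.pi fun _ => μ) := by
  simp_rw [Multiset.prod_map_eq_prod_pow_count]
  exact Integrable.fintype_prod hs

lemma integral_pi_prod_map_eq_zero [SigmaFinite μ] (hm₁ : ∫ x, x ∂μ = 0) {s : Multiset ι} {l : ι}
    (hl : s.count l = 1) :
    ∫ ω, (s.map ω).prod ∂Measure.pi (fun _ => μ) = 0 := by
  rw [integral_pi_prod_map]
  exact prod_eq_zero (mem_univ l) (by simpa [hl] using hm₁)

variable [IsProbabilityMeasure μ]

lemma integrable_pi_prod_map_of_card_le {s : Multiset ι} {q : ℕ} (hμ : MemLp id q μ)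
    (hs : Multiset.card s ≤ q) :
    Integrable (fun ω : ι → ℝ => (s.map ω).prod) (Measure.pi fun _ => μ) :=
  integrable_pi_prod_map fun l =>
    integrable_pow_of_memLp_id hμ ((Multiset.count_le_card l s).trans hs)

lemma integrable_pi_mul (h : MemLp id 2 μ) (i j : ι) :
    Integrable (fun ω : ι → ℝ => ω i * ω j) (Measure.pi fun _ => μ) := by
  simpa using integrable_pi_prod_map_of_card_le (s := {i, j}) h (by simp)

lemma integrable_pi_sq_mul_mul (h : MemLp id 4 μ) (i j k : ι) :
    Integrable (fun ω : ι → ℝ => ω i ^ 2 * (ω j * ω k)) (Measure.pi fun _ => μ) := by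
  simpa [sq, mul_assoc] using integrable_pi_prod_map_of_card_le (s := {i, i, j, k}) h (by simp)

lemma integral_pi_prod_map_eq_one (hm₂ : ∫ x, x ^ 2 ∂μ = 1) {s : Multiset ι}
    (hs : ∀ l, s.count l = 0 ∨ s.count l = 2) :
    ∫ ω, (s.map ω).prod ∂Measure.pi (fun _ => μ) = 1 := by
  rw [integral_pi_prod_map]
  refine prod_eq_one fun l _ => ?_
  rcases hs l with h | h <;> simp [h, hm₂]

lemma integral_pi_mul (hm₁ : ∫ x, x ∂μ = 0) (hm₂ : ∫ x, x ^ 2 ∂μ = 1) (i j : ι) :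
    ∫ ω, ω i * ω j ∂Measure.pi (fun _ => μ) = if i = j then 1 else 0 := by
  have hmono (ω : ι → ℝ) : ω i * ω j = (({i, j} : Multiset ι).map ω).prod := by simp
  simp_rw [hmono]
  split_ifs with hij
  · subst hij
    refine integral_pi_prod_map_eq_one hm₂ fun l => ?_
    by_cases hl : l = i <;> simp [hl]
  · exact integral_pi_prod_map_eq_zero hm₁ (l := i) (by simp [hij])

lemma integral_pi_sq_mul_mul (hm₁ : ∫ x, x ∂μ = 0) (hm₂ : ∫ x, x ^ 2 ∂μ = 1) (i j k : ι) :
    ∫ ω, ω i ^ 2 * (ω j * ω k) ∂Measure.pi (fun _ => μ) =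
      if j = k then (if j = i then ∫ x, x ^ 4 ∂μ else 1) else 0 := by
  have hmono (ω : ι → ℝ) : ω i ^ 2 * (ω j * ω k) = (({i, i, j, k} : Multiset ι).map ω).prod := by
    simp only [Multiset.insert_eq_cons, Multiset.map_cons, Multiset.prod_cons,
      Multiset.map_singleton, Multiset.prod_singleton]
    ring
  simp_rw [hmono]
  split_ifs with hjk hji
  · subst hjk hji
    rw [integral_pi_prod_map, prod_eq_single j (fun l _ hl => by simp [hl]) (by simp)]
    simp
  · subst hjk
    refine integral_pi_prod_map_eq_one hm₂ fun l => ?_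
    by_cases hl : l = i <;> by_cases hl' : l = j <;> simp [hl, hl', hji, Ne.symm hji]
  · -- this coordinate occurs exactly once in the monomial
    refine integral_pi_prod_map_eq_zero hm₁ (l := if k = i then j else k) ?_
    split_ifs with hki
    · subst hki; simp [hjk]
    · simp [hki, Ne.symm hjk]

end ProductMoments

lemma Matrix.mul_mulVec_apply {ι : Type*} [Fintype ι] (B : Matrix ι ι ℝ) (ω : ι → ℝ) (i : ι) :
    ω i * B.mulVec ω i = ∑ j, B i j * (ω i * ω j) := by
  simp only [Matrix.mulVec, dotProduct, mul_sum]
  exact sum_congr rfl fun j _ => by ring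

lemma Matrix.mul_mulVec_apply_sq {ι : Type*} [Fintype ι] (B : Matrix ι ι ℝ) (ω : ι → ℝ) (i : ι) :
    (ω i * B.mulVec ω i) ^ 2 = ∑ j, ∑ k, B i j * B i k * (ω i ^ 2 * (ω j * ω k)) := by
  rw [Matrix.mul_mulVec_apply, sq, sum_mul_sum]
  exact sum_congr rfl fun j _ => sum_congr rfl fun k _ => by ring

section DiagonalEstimator

variable {ι : Type*} [Fintype ι] [DecidableEq ι] {μ : Measure ℝ} [IsProbabilityMeasure μ]

lemma integrable_pi_mul_mulVec_apply (hL2 : MemLp id 2 μ) (B : Matrix ι ι ℝ) (i : ι) :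
    Integrable (fun ω : ι → ℝ => ω i * B.mulVec ω i) (Measure.pi fun _ => μ) := by
  simp_rw [Matrix.mul_mulVec_apply]
  exact integrable_finsetSum _ fun j _ => (integrable_pi_mul hL2 i j).const_mul _

lemma integrable_pi_mul_mulVec_apply_sq (hL4 : MemLp id 4 μ) (B : Matrix ι ι ℝ) (i : ι) :
    Integrable (fun ω : ι → ℝ => (ω i * B.mulVec ω i) ^ 2) (Measure.pi fun _ => μ) := by
  simp_rw [Matrix.mul_mulVec_apply_sq]
  exact integrable_finsetSum _ fun j _ => integrable_finsetSum _ fun k _ =>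
    (integrable_pi_sq_mul_mul hL4 i j k).const_mul _

lemma integral_pi_mul_mulVec_apply (hm₁ : ∫ x, x ∂μ = 0) (hm₂ : ∫ x, x ^ 2 ∂μ = 1)
    (hL2 : MemLp id 2 μ) (B : Matrix ι ι ℝ) (i : ι) :
    ∫ ω, ω i * B.mulVec ω i ∂Measure.pi (fun _ => μ) = B i i := by
  simp_rw [Matrix.mul_mulVec_apply]
  rw [integral_finsetSum _ fun j _ => (integrable_pi_mul hL2 i j).const_mul _]
  simp [integral_const_mul, integral_pi_mul hm₁ hm₂]

lemma integral_pi_mul_mulVec_apply_sq (hm₁ : ∫ x, x ∂μ = 0) (hm₂ : ∫ x, x ^ 2 ∂μ = 1)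
    (hL4 : MemLp id 4 μ) (B : Matrix ι ι ℝ) (i : ι) :
    ∫ ω, (ω i * B.mulVec ω i) ^ 2 ∂Measure.pi (fun _ => μ) =
      ∑ j, B i j ^ 2 + (∫ x, x ^ 4 ∂μ - 1) * B i i ^ 2 := by
  simp_rw [Matrix.mul_mulVec_apply_sq]
  rw [integral_finsetSum _ fun j _ =>
    integrable_finsetSum _ fun k _ => (integrable_pi_sq_mul_mul hL4 i j k).const_mul _]
  simp_rw [integral_finsetSum _ fun k _ => (integrable_pi_sq_mul_mul hL4 i _ k).const_mul _,
    integral_const_mul, integral_pi_sq_mul_mul hm₁ hm₂]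
  have hterm (j : ι) :
      (if j = i then B i j * B i j * ∫ x, x ^ 4 ∂μ else B i j * B i j * 1) =
        B i j ^ 2 + if j = i then (∫ x, x ^ 4 ∂μ - 1) * B i i ^ 2 else 0 := by
    split_ifs with hji
    · subst hji; ring
    · ring
  simp only [mul_ite, mul_zero, sum_ite_eq, mem_univ, if_true, hterm, sum_add_distrib,
    sum_ite_eq']

theorem integral_pi_mul_mulVec_apply_sub_diag (hm₁ : ∫ x, x ∂μ = 0) (hm₂ : ∫ x, x ^ 2 ∂μ = 1)
    (hL2 : MemLp id 2 μ) (B : Matrix ι ι ℝ) (i : ι) :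
    ∫ ω, (ω i * B.mulVec ω i - B i i) ∂Measure.pi (fun _ => μ) = 0 := by
  rw [integral_sub (integrable_pi_mul_mulVec_apply hL2 B i) (integrable_const _),
    integral_pi_mul_mulVec_apply hm₁ hm₂ hL2, integral_const]
  simp

theorem integral_pi_mul_mulVec_apply_sub_diag_sq (hm₁ : ∫ x, x ∂μ = 0) (hm₂ : ∫ x, x ^ 2 ∂μ = 1)
    (hL4 : MemLp id 4 μ) (B : Matrix ι ι ℝ) (i : ι) :
    ∫ ω, (ω i * B.mulVec ω i - B i i) ^ 2 ∂Measure.pi (fun _ => μ) =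
      ∑ j, B i j ^ 2 + (∫ x, x ^ 4 ∂μ - 2) * B i i ^ 2 := by
  have hL2 : MemLp id 2 μ := hL4.mono_exponent (by norm_num)
  have hX : MemLp (fun ω : ι → ℝ => ω i * B.mulVec ω i) 2 (Measure.pi fun _ => μ) :=
    (memLp_two_iff_integrable_sq (integrable_pi_mul_mulVec_apply hL2 B i).aestronglyMeasurable).mpr
      (integrable_pi_mul_mulVec_apply_sq hL4 B i)
  have hmean := integral_pi_mul_mulVec_apply hm₁ hm₂ hL2 B i
  calc ∫ ω, (ω i * B.mulVec ω i - B i i) ^ 2 ∂Measure.pi (fun _ => μ)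
      = Var[fun ω : ι → ℝ => ω i * B.mulVec ω i; Measure.pi fun _ => μ] := by
        rw [variance_eq_integral hX.aemeasurable, hmean]
    _ = ∫ ω, (ω i * B.mulVec ω i) ^ 2 ∂Measure.pi (fun _ => μ) - B i i ^ 2 := by
        rw [variance_eq_sub hX, hmean]
        rfl
    _ = ∑ j, B i j ^ 2 + (∫ x, x ^ 4 ∂μ - 2) * B i i ^ 2 := by
        rw [integral_pi_mul_mulVec_apply_sq hm₁ hm₂ hL4]
        ring

end DiagonalEstimator

/-- For `B ∈ ℝ^{n×n}` and `ω` a standard Gaussian vector in `ℝ^n`,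
the `i`-th entry of the single-sample error `e := ω ⊙ (Bω) − diag B` has mean zero
and second moment `B i i ^ 2 + ‖[B]_{i,:}‖₂²`. -/
theorem stmt_0 (n : ℕ) (B : Matrix (Fin n) (Fin n) ℝ) (i : Fin n)
    (P : Measure (Fin n → ℝ))
    (hP : P = Measure.pi fun _ : Fin n => gaussianReal 0 1) :
    (∫ ω, (ω i * B.mulVec ω i - B i i) ∂P) = 0 ∧
    (∫ ω, (ω i * B.mulVec ω i - B i i) ^ 2 ∂P) = B i i ^ 2 + ∑ j, B i j ^ 2 := by
  subst hP
  have hm₁ : ∫ x, x ∂gaussianReal 0 1 = 0 := integral_id_gaussianReal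
  have hm₂ : ∫ x, x ^ 2 ∂gaussianReal 0 1 = 1 := by simpa using integral_even_pow_gaussianReal 1
  have hm₄ : ∫ x, x ^ 4 ∂gaussianReal 0 1 = 3 := by simpa using integral_even_pow_gaussianReal 2
  refine ⟨integral_pi_mul_mulVec_apply_sub_diag hm₁ hm₂ (memLp_id_gaussianReal 2) B i, ?_⟩
  rw [integral_pi_mul_mulVec_apply_sub_diag_sq hm₁ hm₂ (memLp_id_gaussianReal 4) B i, hm₄]
  ring
end

section
/- Let B ∈ ℝ^{n×n} and let EST^m be the generalized stochastic diagonal estimator built from m i.i.d. standard Gaussian query vectors. Then for every index i, E[((EST^m − diag(B))_i)²] = (1/m)·(B_{ii}² + ‖[B]_{i,:}‖₂²). -/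
/-!
Write `f(y) = y_i (B y)_i - B_ii` for the error of a single query. The `m` errors `f(ω^{(k)})` are
i.i.d. and centred, so the mean square of their average is `E[f²] / m`. For one standard Gaussian
query, `f(y) = B_ii (y_i² - 1) + y_i L(y)` with `L(y) = ∑_{j ≠ i} B_ij y_j` independent of `y_i` and
centred; hence the cross term vanishes and
`E[f²] = B_ii² E[(y_i² - 1)²] + E[y_i²] E[L²] = 2 B_ii² + ∑_{j ≠ i} B_ij²`,
where `E[y_i⁴] = 3` comes from the Gamma-function formula for the even Gaussian moments.
-/

open MeasureTheory ProbabilityTheory Real Finset Matrix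

lemma integral_pow_two_mul_gaussianReal (k : ℕ) :
    ∫ x, x ^ (2 * k) ∂gaussianReal 0 1 = ((2 * k - 1).doubleFactorial : ℕ) := by
  have hIoi : ∫ t in Set.Ioi (0 : ℝ), t ^ (2 * k) * exp (-(1 / 2) * t ^ 2)
      = 2 ^ k * √2 * (1 / 2) * Gamma (k + 1 / 2) := by
    have h := integral_rpow_mul_exp_neg_mul_rpow (p := 2) (q := ((2 * k : ℕ) : ℝ)) (b := 1 / 2)
      (by norm_num) (neg_one_lt_zero.trans_le (Nat.cast_nonneg _)) (by norm_num)
    have hexp : (((2 * k : ℕ) : ℝ) + 1) / 2 = k + 1 / 2 := by push_cast; ring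
    have hpow : (1 / 2 : ℝ) ^ (-(k + 1 / 2 : ℝ)) = 2 ^ k * √2 := by
      rw [one_div, inv_rpow zero_le_two, ← rpow_neg zero_le_two, neg_neg,
        rpow_add zero_lt_two, rpow_natCast, sqrt_eq_rpow, one_div]
    simp only [rpow_natCast, rpow_two] at h
    rw [h, neg_div, hexp, hpow]
  have hdensity : ∀ x : ℝ, gaussianPDFReal 0 1 x • x ^ (2 * k)
      = (√(2 * π))⁻¹ * (|x| ^ (2 * k) * exp (-(1 / 2) * |x| ^ 2)) := by
    intro x
    simp only [gaussianPDFReal, smul_eq_mul, (even_two_mul k).pow_abs, sq_abs]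
    push_cast
    ring_nf
  rw [integral_gaussianReal_eq_integral_smul one_ne_zero]
  simp_rw [hdensity]
  rw [integral_const_mul, integral_comp_abs (f := fun t => t ^ (2 * k) * exp (-(1 / 2) * t ^ 2)),
    hIoi, Gamma_nat_add_half, sqrt_mul zero_le_two]
  field_simp

lemma integral_sq_gaussianReal : ∫ x, x ^ 2 ∂gaussianReal 0 1 = 1 := by
  simpa using integral_pow_two_mul_gaussianReal 1

lemma integral_pow_four_gaussianReal : ∫ x, x ^ 4 ∂gaussianReal 0 1 = 3 := by
  simpa [Nat.doubleFactorial] using integral_pow_two_mul_gaussianReal 2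

instance : ENNReal.HolderTriple 4 4 2 where
  inv_add_inv_eq_inv := by
    rw [← two_mul, show (4 : ENNReal) = 2 * 2 by norm_num, ENNReal.mul_inv (by simp) (by simp),
      ← mul_assoc, ENNReal.mul_inv_cancel (by simp) (by simp), one_mul]

lemma integral_add_sq {Ω : Type*} {mΩ : MeasurableSpace Ω} {ν : Measure Ω} {f g : Ω → ℝ}
    (hf : MemLp f 2 ν) (hg : MemLp g 2 ν) :
    ∫ ω, (f ω + g ω) ^ 2 ∂ν = ∫ ω, f ω ^ 2 ∂ν + 2 * ∫ ω, f ω * g ω ∂ν + ∫ ω, g ω ^ 2 ∂ν := by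
  have hfg : Integrable (fun ω => 2 * (f ω * g ω)) ν := (hf.integrable_mul hg).const_mul 2
  have hsum : Integrable (fun ω => f ω ^ 2 + 2 * (f ω * g ω)) ν := hf.integrable_sq.add hfg
  simp only [add_sq, mul_assoc]
  rw [integral_add hsum hg.integrable_sq, integral_add hf.integrable_sq hfg, integral_const_mul]

lemma integral_sq_sum_of_indepFun {Ω ι : Type*} {mΩ : MeasurableSpace Ω} {ν : Measure Ω}
    [IsProbabilityMeasure ν] {X : ι → Ω → ℝ} {s : Finset ι} (hX : ∀ k ∈ s, MemLp (X k) 2 ν)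
    (hX0 : ∀ k ∈ s, ∫ ω, X k ω ∂ν = 0) (hindep : Set.Pairwise ↑s fun k l => X k ⟂ᵢ[ν] X l) :
    ∫ ω, (∑ k ∈ s, X k ω) ^ 2 ∂ν = ∑ k ∈ s, ∫ ω, X k ω ^ 2 ∂ν := by
  have hsum0 : ∫ ω, (∑ k ∈ s, X k) ω ∂ν = 0 := by
    simp only [Finset.sum_apply]
    rw [integral_finsetSum _ fun k hk => (hX k hk).integrable one_le_two]
    exact sum_eq_zero hX0
  have hmeas : AEMeasurable (∑ k ∈ s, X k) ν :=
    Finset.aemeasurable_sum _ fun k hk => (hX k hk).aestronglyMeasurable.aemeasurable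
  calc ∫ ω, (∑ k ∈ s, X k ω) ^ 2 ∂ν = Var[∑ k ∈ s, X k; ν] := by
        rw [variance_of_integral_eq_zero hmeas hsum0]
        simp only [Finset.sum_apply]
    _ = ∑ k ∈ s, Var[X k; ν] := IndepFun.variance_sum hX hindep
    _ = ∑ k ∈ s, ∫ ω, X k ω ^ 2 ∂ν := sum_congr rfl fun k hk =>
        variance_of_integral_eq_zero (hX k hk).aestronglyMeasurable.aemeasurable (hX0 k hk)

lemma integral_sq_sum_pi {ι E : Type*} [Fintype ι] {mE : MeasurableSpace E} {ν : Measure E}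
    [IsProbabilityMeasure ν] {g : ι → E → ℝ} (hg : ∀ k, MemLp (g k) 2 ν)
    (hg0 : ∀ k, ∫ x, g k x ∂ν = 0) (s : Finset ι) :
    ∫ x, (∑ k ∈ s, g k (x k)) ^ 2 ∂(Measure.pi fun _ => ν) = ∑ k ∈ s, ∫ x, g k x ^ 2 ∂ν := by
  have hindep := iIndepFun_pi (μ := fun _ : ι => ν) fun k =>
    (hg k).aestronglyMeasurable.aemeasurable
  refine (integral_sq_sum_of_indepFun (X := fun k (x : ι → E) => g k (x k))
    (fun k _ => (hg k).comp_measurePreserving (measurePreserving_eval _ k))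
    (fun k _ => (integral_comp_eval (hg k).aestronglyMeasurable).trans (hg0 k))
    (fun k _ l _ hkl => hindep.indepFun hkl)).trans ?_
  exact sum_congr rfl fun k _ => integral_comp_eval (μ := fun _ : ι => ν)
    (f := fun t => g k t ^ 2) ((hg k).aestronglyMeasurable.pow 2)

section LinearForms

variable {ι : Type*} [Fintype ι] {μ : Measure ℝ} [IsProbabilityMeasure μ]

lemma memLp_eval_pi {p : ENNReal} (hp : MemLp id p μ) (j : ι) :
    MemLp (fun y : ι → ℝ => y j) p (Measure.pi fun _ => μ) :=
  hp.comp_measurePreserving (measurePreserving_eval _ j)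

lemma memLp_sum_mul_eval_pi {p : ENNReal} (hp : MemLp id p μ) (c : ι → ℝ) (s : Finset ι) :
    MemLp (fun y : ι → ℝ => ∑ j ∈ s, c j * y j) p (Measure.pi fun _ => μ) :=
  memLp_finsetSum s fun j _ => (memLp_eval_pi hp j).const_mul (c j)

lemma integral_sum_mul_eval_pi (hμ : Integrable id μ) (h1 : ∫ x, x ∂μ = 0) (c : ι → ℝ)
    (s : Finset ι) : ∫ y : ι → ℝ, ∑ j ∈ s, c j * y j ∂(Measure.pi fun _ => μ) = 0 := by
  rw [integral_finsetSum _ fun j _ => (integrable_eval (μ := fun _ : ι => μ) hμ).const_mul (c j)]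
  simp [integral_const_mul, integral_eval, h1]

lemma integral_sum_mul_eval_pi_sq (hμ : MemLp id 2 μ) (h1 : ∫ x, x ∂μ = 0)
    (h2 : ∫ x, x ^ 2 ∂μ = 1) (c : ι → ℝ) (s : Finset ι) :
    ∫ y : ι → ℝ, (∑ j ∈ s, c j * y j) ^ 2 ∂(Measure.pi fun _ => μ) = ∑ j ∈ s, c j ^ 2 := by
  rw [integral_sq_sum_pi (g := fun j t => c j * t) (fun j => hμ.const_mul (c j))
    (fun j => by rw [integral_const_mul, h1, mul_zero])]
  simp [mul_pow, integral_const_mul, h2]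

lemma indepFun_eval_sum_erase [DecidableEq ι] (c : ι → ℝ) (i : ι) :
    (fun y : ι → ℝ => y i) ⟂ᵢ[Measure.pi fun _ => μ] fun y => ∑ j ∈ univ.erase i, c j * y j := by
  have h := (iIndepFun_pi (μ := fun _ : ι => μ) (X := fun _ => id) fun _ => aemeasurable_id)
    |>.indepFun_finset {i} (univ.erase i) (by simp) fun _ => measurable_pi_apply _
  have h' := h.comp (φ := fun v : ({i} : Finset ι) → ℝ => v ⟨i, mem_singleton_self i⟩)
    (ψ := fun v : univ.erase i → ℝ => ∑ j : univ.erase i, c j * v j) (_mγ := inferInstance)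
    (measurable_pi_apply _) (by fun_prop)
  convert h' using 1
  · rfl
  funext y
  exact (sum_coe_sort (univ.erase i) fun j => c j * y j).symm

end LinearForms

section SingleQuery

variable {ι : Type*} [Fintype ι] {μ : Measure ℝ} [IsProbabilityMeasure μ]

lemma memLp_sq_sub_one (h4 : MemLp id 4 μ) : MemLp (fun x : ℝ => x ^ 2 - 1) 2 μ := by
  have h : MemLp (fun x : ℝ => x * x - 1) 2 μ := (h4.mul h4).sub (memLp_const 1)
  simpa [sq] using h

lemma integral_sq_sub_one_sq (h4 : MemLp id 4 μ) (h2 : ∫ x, x ^ 2 ∂μ = 1) :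
    ∫ x, (x ^ 2 - 1) ^ 2 ∂μ = ∫ x, x ^ 4 ∂μ - 1 := by
  have hx4 : Integrable (fun x : ℝ => x ^ 4) μ := by
    simpa [Real.norm_eq_abs, (show Even 4 by decide).pow_abs] using
      h4.integrable_norm_pow' (p := 4)
  have hx2 : Integrable (fun x : ℝ => 2 * x ^ 2) μ :=
    (h4.mono_exponent (by norm_num)).integrable_sq.const_mul 2
  have hx42 : Integrable (fun x : ℝ => x ^ 4 - 2 * x ^ 2) μ := hx4.sub hx2
  have hexpand : ∀ x : ℝ, (x ^ 2 - 1) ^ 2 = x ^ 4 - 2 * x ^ 2 + 1 := fun x => by ring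
  simp only [hexpand]
  rw [integral_add hx42 (integrable_const 1), integral_sub hx4 hx2, integral_const_mul, h2]
  simp only [integral_const, probReal_univ, smul_eq_mul]
  ring

lemma memLp_mul_mulVec_apply_sub_diag (h4 : MemLp id 4 μ) (B : Matrix ι ι ℝ) (i : ι) :
    MemLp (fun y => y i * (B *ᵥ y) i - B i i) 2 (Measure.pi fun _ => μ) :=
  ((memLp_sum_mul_eval_pi h4 (B i) univ).mul (memLp_eval_pi h4 i)).sub (memLp_const _)

lemma memLp_const_mul_eval_sq_sub_one (h4 : MemLp id 4 μ) (a : ℝ) (i : ι) :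
    MemLp (fun y : ι → ℝ => a * (y i ^ 2 - 1)) 2 (Measure.pi fun _ => μ) :=
  ((memLp_sq_sub_one h4).const_mul a).comp_measurePreserving (measurePreserving_eval _ i)

variable [DecidableEq ι]

lemma mul_mulVec_apply_sub_diag (B : Matrix ι ι ℝ) (i : ι) (y : ι → ℝ) :
    y i * (B *ᵥ y) i - B i i
      = B i i * (y i ^ 2 - 1) + y i * ∑ j ∈ univ.erase i, B i j * y j := by
  rw [mulVec, dotProduct, ← add_sum_erase _ _ (mem_univ i)]
  ring

lemma memLp_eval_mul_sum_erase (h4 : MemLp id 4 μ) (c : ι → ℝ) (i : ι) :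
    MemLp (fun y : ι → ℝ => y i * ∑ j ∈ univ.erase i, c j * y j) 2 (Measure.pi fun _ => μ) :=
  (memLp_sum_mul_eval_pi h4 c _).mul (memLp_eval_pi h4 i)

lemma integral_mul_mulVec_apply_sub_diag (h4 : MemLp id 4 μ) (h1 : ∫ x, x ∂μ = 0)
    (h2 : ∫ x, x ^ 2 ∂μ = 1) (B : Matrix ι ι ℝ) (i : ι) :
    ∫ y, y i * (B *ᵥ y) i - B i i ∂(Measure.pi fun _ => μ) = 0 := by
  have hμ : Integrable id μ := h4.integrable (by norm_num)
  have hx2 : Integrable (fun x : ℝ => x ^ 2) μ := (h4.mono_exponent (by norm_num)).integrable_sq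
  have hdiag : ∫ y : ι → ℝ, B i i * (y i ^ 2 - 1) ∂(Measure.pi fun _ => μ) = 0 := by
    rw [integral_comp_eval (μ := fun _ : ι => μ) (f := fun t => B i i * (t ^ 2 - 1)) (by fun_prop),
      integral_const_mul, integral_sub hx2 (integrable_const 1), h2]
    simp
  have hoff : ∫ y : ι → ℝ, y i * ∑ j ∈ univ.erase i, B i j * y j ∂(Measure.pi fun _ => μ) = 0 := by
    rw [(indepFun_eval_sum_erase (B i) i).integral_fun_mul_eq_mul_integral
      (memLp_eval_pi h4 i).aestronglyMeasurable
      (memLp_sum_mul_eval_pi h4 (B i) _).aestronglyMeasurable,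
      integral_sum_mul_eval_pi hμ h1, mul_zero]
  simp only [mul_mulVec_apply_sub_diag]
  rw [integral_add ((memLp_const_mul_eval_sq_sub_one h4 (B i i) i).integrable one_le_two)
    ((memLp_eval_mul_sum_erase h4 (B i) i).integrable one_le_two), hdiag, hoff, add_zero]

lemma integral_mul_mulVec_apply_sub_diag_sq (h4 : MemLp id 4 μ) (h1 : ∫ x, x ∂μ = 0)
    (h2 : ∫ x, x ^ 2 ∂μ = 1) (B : Matrix ι ι ℝ) (i : ι) :
    ∫ y, (y i * (B *ᵥ y) i - B i i) ^ 2 ∂(Measure.pi fun _ => μ)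
      = (∫ x, x ^ 4 ∂μ - 2) * B i i ^ 2 + ∑ j, B i j ^ 2 := by
  have hY := memLp_eval_pi (ι := ι) h4 i
  have hL := memLp_sum_mul_eval_pi h4 (B i) (univ.erase i)
  have hind := indepFun_eval_sum_erase (μ := μ) (B i) i
  have hdiag : ∫ y : ι → ℝ, (B i i * (y i ^ 2 - 1)) ^ 2 ∂(Measure.pi fun _ => μ)
      = B i i ^ 2 * (∫ x, x ^ 4 ∂μ - 1) := by
    rw [integral_comp_eval (μ := fun _ : ι => μ) (f := fun t => (B i i * (t ^ 2 - 1)) ^ 2)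
      (by fun_prop)]
    simp only [mul_pow]
    rw [integral_const_mul, integral_sq_sub_one_sq h4 h2]
  have hcross : ∫ y : ι → ℝ, B i i * (y i ^ 2 - 1) * (y i * ∑ j ∈ univ.erase i, B i j * y j)
      ∂(Measure.pi fun _ => μ) = 0 := by
    calc _ = ∫ y : ι → ℝ, (B i i * (y i ^ 2 - 1) * y i) * ∑ j ∈ univ.erase i, B i j * y j
          ∂(Measure.pi fun _ => μ) := integral_congr_ae (ae_of_all _ fun y => by ring)
      _ = (∫ y : ι → ℝ, B i i * (y i ^ 2 - 1) * y i ∂(Measure.pi fun _ => μ))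
          * ∫ y : ι → ℝ, ∑ j ∈ univ.erase i, B i j * y j ∂(Measure.pi fun _ => μ) :=
        hind.integral_fun_comp_mul_comp (f := fun t => B i i * (t ^ 2 - 1) * t) (g := id)
          hY.aestronglyMeasurable.aemeasurable hL.aestronglyMeasurable.aemeasurable
          (by fun_prop) (by fun_prop)
      _ = 0 := by rw [integral_sum_mul_eval_pi (h4.integrable (by norm_num)) h1, mul_zero]
  have hoff : ∫ y : ι → ℝ, (y i * ∑ j ∈ univ.erase i, B i j * y j) ^ 2 ∂(Measure.pi fun _ => μ)
      = ∑ j ∈ univ.erase i, B i j ^ 2 := by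
    simp only [mul_pow]
    rw [hind.integral_fun_comp_mul_comp (f := fun t => t ^ 2) (g := fun t => t ^ 2)
      hY.aestronglyMeasurable.aemeasurable hL.aestronglyMeasurable.aemeasurable
      (by fun_prop) (by fun_prop),
      integral_comp_eval (μ := fun _ : ι => μ) (f := fun t => t ^ 2) (by fun_prop), h2, one_mul,
      integral_sum_mul_eval_pi_sq (h4.mono_exponent (by norm_num)) h1 h2]
  simp only [mul_mulVec_apply_sub_diag]
  rw [integral_add_sq (memLp_const_mul_eval_sq_sub_one h4 (B i i) i)
    (memLp_eval_mul_sum_erase h4 (B i) i), hdiag, hcross, hoff, ← add_sum_erase _ _ (mem_univ i)]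
  ring

end SingleQuery

/-- For the generalized stochastic diagonal estimator
`EST^m := (1/m) Σ_k ω^{(k)} ⊙ (B ω^{(k)})` built from `m` i.i.d. standard Gaussian
query vectors, `E[((EST^m − diag B)_i)²] = (1/m)(B_{ii}² + ‖[B]_{i,:}‖₂²)`. -/
theorem stmt_1 (n m : ℕ) (hm : 1 ≤ m) (B : Matrix (Fin n) (Fin n) ℝ) (i : Fin n)
    (P : Measure (Fin m → Fin n → ℝ))
    (hP : P = Measure.pi fun _ : Fin m => Measure.pi fun _ : Fin n => gaussianReal 0 1) :
    (∫ x, ((1 / (m : ℝ)) * (∑ k, x k i * B.mulVec (x k) i) - B i i) ^ 2 ∂P)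
      = (1 / (m : ℝ)) * (B i i ^ 2 + ∑ j, B i j ^ 2) := by
  subst hP
  have hm0 : (m : ℝ) ≠ 0 := Nat.cast_ne_zero.mpr (Nat.one_le_iff_ne_zero.mp hm)
  have h4 : MemLp id 4 (gaussianReal 0 1) := memLp_id_gaussianReal' 4 (by simp)
  have h1 : ∫ x, x ∂gaussianReal 0 1 = 0 := integral_id_gaussianReal
  have h2 := integral_sq_gaussianReal
  have hcentre : ∀ x : Fin m → Fin n → ℝ,
      (1 / (m : ℝ)) * (∑ k, x k i * (B *ᵥ x k) i) - B i i
        = (1 / (m : ℝ)) * ∑ k, (x k i * (B *ᵥ x k) i - B i i) := by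
    intro x
    rw [sum_sub_distrib, sum_const, card_univ, Fintype.card_fin, nsmul_eq_mul]
    field_simp
  simp_rw [hcentre, mul_pow]
  rw [integral_const_mul, integral_sq_sum_pi (g := fun _ y => y i * (B *ᵥ y) i - B i i)
      (fun _ => memLp_mul_mulVec_apply_sub_diag h4 B i)
      (fun _ => integral_mul_mulVec_apply_sub_diag h4 h1 h2 B i),
    sum_const, card_univ, Fintype.card_fin, nsmul_eq_mul,
    integral_mul_mulVec_apply_sub_diag_sq h4 h1 h2 B i, integral_pow_four_gaussianReal]
  field_simp
  ring
end

section
/- (Corollary 2.2) Let B ∈ ℝ^{n×n} with B_{ii} ≠ 0 for all i, and let EST^m be the generalized stochastic diagonal estimator built from m i.i.d. standard Gaussian query vectors. For any 0 < ε < 1 and 0 < δ < 1, if m ≥ (1/(ε² δ))·Σ_{i=1}^n (1 + ‖[B]_{i,:}‖₂² / B_{ii}²), then P{ ‖EST^m − diag(B)‖₂ ≤ ε·‖diag(B)‖₂ } ≥ 1 − δ. -/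
open MeasureTheory ProbabilityTheory

/-! Each probe `ω ⊙ Bω` is an unbiased estimator of `diag B`, and by the Gaussian moments
`E ω_i² = 1`, `E ω_i⁴ = 3` its `i`-th coordinate has variance `‖[B]_{i,:}‖₂² + B_{ii}²`.
Averaging `m` independent probes divides the variance by `m`, so
`E ‖EST^m - diag B‖₂² = (1/m) Σ_i (‖[B]_{i,:}‖₂² + B_{ii}²) ≤ ε² δ ‖diag B‖₂²` under the
hypothesis on `m`, and Markov's inequality for `‖EST^m - diag B‖₂²` gives the claim. -/

open Polynomial in
/-- The `k`-th derivative of `exp (t ^ 2 / 2)`, the moment generating function of `N(0, 1)`,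
is this polynomial times `exp (t ^ 2 / 2)`; its value at `0` is the `k`-th Gaussian moment. -/
noncomputable def expHalfSqDerivPoly : ℕ → ℝ[X]
  | 0 => 1
  | k + 1 => derivative (expHalfSqDerivPoly k) + X * expHalfSqDerivPoly k

open Polynomial in
lemma deriv_eval_mul_exp_half_sq (p : ℝ[X]) :
    deriv (fun t => p.eval t * Real.exp (t ^ 2 / 2))
      = fun t => (derivative p + X * p).eval t * Real.exp (t ^ 2 / 2) := by
  funext t
  have hexp : HasDerivAt (fun t : ℝ => Real.exp (t ^ 2 / 2)) (t * Real.exp (t ^ 2 / 2)) t := by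
    convert ((hasDerivAt_pow 2 t).div_const 2).exp using 1
    ring
  rw [((p.hasDerivAt t).fun_mul hexp).deriv]
  simp only [eval_add, eval_mul, eval_X]
  ring

lemma iteratedDeriv_exp_half_sq (k : ℕ) :
    iteratedDeriv k (fun t => Real.exp (t ^ 2 / 2))
      = fun t => (expHalfSqDerivPoly k).eval t * Real.exp (t ^ 2 / 2) := by
  induction k with
  | zero => simp [expHalfSqDerivPoly]
  | succ k ih => rw [iteratedDeriv_succ, ih, deriv_eval_mul_exp_half_sq]; rfl

lemma zero_mem_interior_integrableExpSet_gaussianReal :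
    (0 : ℝ) ∈ interior (integrableExpSet id (gaussianReal 0 1)) := by
  simp [integrableExpSet_id_gaussianReal]

lemma integral_pow_gaussianReal (k : ℕ) :
    ∫ x, x ^ k ∂gaussianReal 0 1 = (expHalfSqDerivPoly k).eval 0 := by
  have h := iteratedDeriv_mgf_zero zero_mem_interior_integrableExpSet_gaussianReal k
  simp only [mgf_id_gaussianReal, zero_mul, zero_add, NNReal.coe_one, one_mul,
    iteratedDeriv_exp_half_sq] at h
  simpa using h.symm

noncomputable abbrev gaussianPi (ι : Type*) [Fintype ι] : Measure (ι → ℝ) :=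
  Measure.pi fun _ : ι => gaussianReal 0 1

section GaussianPi

variable {ι : Type*} [Fintype ι]

lemma integrable_prod_pow_gaussianPi (e : ι → ℕ) :
    Integrable (fun y => ∏ t, y t ^ e t) (gaussianPi ι) :=
  .fintype_prod fun t => integrable_pow_of_mem_interior_integrableExpSet
    zero_mem_interior_integrableExpSet_gaussianReal (e t)

lemma integral_prod_pow_gaussianPi (e : ι → ℕ) :
    ∫ y, ∏ t, y t ^ e t ∂gaussianPi ι = ∏ t, (expHalfSqDerivPoly (e t)).eval 0 := by
  rw [integral_fintype_prod_eq_prod (fun t (x : ℝ) => x ^ e t)]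
  simp only [integral_pow_gaussianReal]

section Monomials

variable [DecidableEq ι]

lemma prod_pow_ite_eq {M : Type*} [CommMonoid M] (y : ι → M) (i : ι) (a : ℕ) :
    ∏ t, y t ^ (if t = i then a else 0) = y i ^ a := by
  simp [pow_ite]

lemma mul_eq_prod_pow (y : ι → ℝ) (i j : ι) :
    y i * y j = ∏ t, y t ^ ((if t = i then 1 else 0) + (if t = j then 1 else 0)) := by
  simp only [pow_add, Finset.prod_mul_distrib, prod_pow_ite_eq, pow_one]

lemma sq_mul_mul_eq_prod_pow (y : ι → ℝ) (i j l : ι) :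
    y i ^ 2 * y j * y l = ∏ t, y t ^
      ((if t = i then 2 else 0) + (if t = j then 1 else 0) + (if t = l then 1 else 0)) := by
  simp only [pow_add, Finset.prod_mul_distrib, prod_pow_ite_eq, pow_one]

lemma integrable_mul_gaussianPi (i j : ι) : Integrable (fun y => y i * y j) (gaussianPi ι) := by
  simp only [mul_eq_prod_pow]
  exact integrable_prod_pow_gaussianPi _

lemma integrable_sq_mul_mul_gaussianPi (i j l : ι) :
    Integrable (fun y => y i ^ 2 * y j * y l) (gaussianPi ι) := by
  simp only [sq_mul_mul_eq_prod_pow]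
  exact integrable_prod_pow_gaussianPi _

lemma integral_mul_gaussianPi (i j : ι) :
    ∫ y, y i * y j ∂gaussianPi ι = if i = j then 1 else 0 := by
  simp only [mul_eq_prod_pow, integral_prod_pow_gaussianPi]
  by_cases hij : i = j
  · subst hij
    rw [Finset.prod_eq_single i] <;> simp +contextual [expHalfSqDerivPoly]
  · refine (Finset.prod_eq_zero (Finset.mem_univ i) ?_).trans (if_neg hij).symm
    simp [hij, expHalfSqDerivPoly]

lemma integral_sq_mul_mul_gaussianPi (i j l : ι) :
    ∫ y, y i ^ 2 * y j * y l ∂gaussianPi ι = if j = l then (if i = j then 3 else 1) else 0 := by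
  simp only [sq_mul_mul_eq_prod_pow, integral_prod_pow_gaussianPi]
  by_cases hjl : j = l
  · subst hjl
    by_cases hij : i = j
    · subst hij
      rw [Finset.prod_eq_single i] <;> simp +contextual [expHalfSqDerivPoly]
      norm_num
    · rw [if_pos rfl, if_neg hij]
      refine Finset.prod_eq_one fun t _ => ?_
      by_cases hti : t = i <;> by_cases htj : t = j <;>
        simp [hti, htj, hij, Ne.symm hij, expHalfSqDerivPoly]
  · rw [if_neg hjl]
    by_cases hij : i = j
    · subst hij
      refine Finset.prod_eq_zero (Finset.mem_univ l) ?_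
      simp [Ne.symm hjl, expHalfSqDerivPoly]
    · refine Finset.prod_eq_zero (Finset.mem_univ j) ?_
      simp [Ne.symm hij, hjl, expHalfSqDerivPoly]

end Monomials

variable (B : Matrix ι ι ℝ) (i : ι)

lemma mul_mulVec_apply_eq_sum (y : ι → ℝ) : y i * B.mulVec y i = ∑ j, B i j * (y i * y j) := by
  simp only [Matrix.mulVec, dotProduct, Finset.mul_sum]
  exact Finset.sum_congr rfl fun j _ => by ring

lemma sq_mul_mulVec_apply_eq_sum (y : ι → ℝ) :
    (y i * B.mulVec y i) ^ 2 = ∑ j, ∑ l, B i j * B i l * (y i ^ 2 * y j * y l) := by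
  rw [mul_mulVec_apply_eq_sum, sq, Finset.sum_mul_sum]
  exact Finset.sum_congr rfl fun j _ => Finset.sum_congr rfl fun l _ => by ring

variable [DecidableEq ι]

lemma integral_mul_mulVec_apply_gaussianPi : ∫ y, y i * B.mulVec y i ∂gaussianPi ι = B i i := by
  simp_rw [mul_mulVec_apply_eq_sum]
  rw [integral_finsetSum _ fun j _ => (integrable_mul_gaussianPi i j).const_mul _]
  simp [integral_const_mul, integral_mul_gaussianPi]

lemma integrable_sq_mul_mulVec_apply_gaussianPi :
    Integrable (fun y => (y i * B.mulVec y i) ^ 2) (gaussianPi ι) := by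
  simp_rw [sq_mul_mulVec_apply_eq_sum]
  exact integrable_finsetSum _ fun j _ => integrable_finsetSum _ fun l _ =>
    (integrable_sq_mul_mul_gaussianPi i j l).const_mul _

lemma integral_sq_mul_mulVec_apply_gaussianPi :
    ∫ y, (y i * B.mulVec y i) ^ 2 ∂gaussianPi ι = ∑ j, B i j ^ 2 + 2 * B i i ^ 2 := by
  simp_rw [sq_mul_mulVec_apply_eq_sum]
  rw [integral_finsetSum _ fun j _ => integrable_finsetSum _ fun l _ =>
    (integrable_sq_mul_mul_gaussianPi i j l).const_mul _]
  simp only [integral_finsetSum _ fun l _ => (integrable_sq_mul_mul_gaussianPi i _ l).const_mul _,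
    integral_const_mul, integral_sq_mul_mul_gaussianPi]
  have hrow : ∀ j, ∑ l, B i j * B i l * (if j = l then (if i = j then 3 else 1) else 0)
      = B i j ^ 2 + if i = j then 2 * B i i ^ 2 else 0 := by
    intro j
    rw [Fintype.sum_eq_single j fun l hl => by simp [Ne.symm hl]]
    by_cases hij : i = j
    · subst hij; simp only [↓reduceIte]; ring
    · simp only [↓reduceIte, hij, mul_one, add_zero]; ring
  rw [Finset.sum_congr rfl fun j _ => hrow j, Finset.sum_add_distrib, Finset.sum_ite_eq]
  simp

lemma memLp_mul_mulVec_apply_gaussianPi :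
    MemLp (fun y => y i * B.mulVec y i) 2 (gaussianPi ι) :=
  (memLp_two_iff_integrable_sq (by fun_prop)).2 (integrable_sq_mul_mulVec_apply_gaussianPi B i)

lemma variance_mul_mulVec_apply_gaussianPi :
    Var[fun y => y i * B.mulVec y i; gaussianPi ι] = ∑ j, B i j ^ 2 + B i i ^ 2 := by
  rw [variance_eq_sub (memLp_mul_mulVec_apply_gaussianPi B i)]
  simp only [Pi.pow_apply]
  rw [integral_sq_mul_mulVec_apply_gaussianPi, integral_mul_mulVec_apply_gaussianPi]
  ring

end GaussianPi

lemma memLp_sum_comp_eval {ι Ω : Type*} [Fintype ι] [MeasurableSpace Ω]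
    {μ : Measure Ω} [IsProbabilityMeasure μ] {f : Ω → ℝ} {p : ENNReal} (hf : MemLp f p μ) :
    MemLp (fun x : ι → Ω => ∑ k, f (x k)) p (Measure.pi fun _ => μ) :=
  memLp_finsetSum _ fun k _ => hf.comp_measurePreserving (measurePreserving_eval _ k)

lemma integral_sq_sampleMean_sub {ι Ω : Type*} [Fintype ι] [Nonempty ι] [MeasurableSpace Ω]
    {μ : Measure Ω} [IsProbabilityMeasure μ] {f : Ω → ℝ} (hf : MemLp f 2 μ) :
    ∫ x, ((Fintype.card ι : ℝ)⁻¹ * ∑ k, f (x k) - μ[f]) ^ 2 ∂Measure.pi (fun _ : ι => μ)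
      = Var[f; μ] / Fintype.card ι := by
  set c : ℝ := (Fintype.card ι : ℝ)⁻¹
  have hmean : ∫ x, c * ∑ k, f (x k) ∂Measure.pi (fun _ : ι => μ) = μ[f] := by
    rw [integral_const_mul, integral_finsetSum _ fun k _ =>
      integrable_comp_eval (hf.integrable one_le_two)]
    simp [integral_comp_eval (μ := fun _ : ι => μ) hf.aestronglyMeasurable, c]
  have hvar := variance_eq_integral ((memLp_sum_comp_eval (ι := ι) hf).const_mul c).aemeasurable
  rw [hmean, variance_const_mul, ← Finset.sum_fn, variance_sum_pi fun _ => hf] at hvar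
  rw [← hvar]
  simp only [inv_pow, Finset.sum_const, Finset.card_univ, nsmul_eq_mul, c]
  field_simp

lemma ofReal_one_sub_le_measure_le_of_integral_le {Ω : Type*} [MeasurableSpace Ω]
    {μ : Measure Ω} [IsProbabilityMeasure μ] {g : Ω → ℝ} (hg : 0 ≤ g) (hgi : Integrable g μ)
    {t δ : ℝ} (ht : 0 < t) (h : ∫ x, g x ∂μ ≤ δ * t) :
    ENNReal.ofReal (1 - δ) ≤ μ {x | g x ≤ t} := by
  have hδ : 0 ≤ δ := nonneg_of_mul_nonneg_left ((integral_nonneg hg).trans h) ht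
  have hmarkov : μ {x | t ≤ g x} ≤ ENNReal.ofReal δ := by
    rw [← ofReal_measureReal]
    refine ENNReal.ofReal_le_ofReal (le_of_mul_le_mul_left ?_ ht)
    exact (mul_meas_ge_le_integral_of_nonneg (ae_of_all _ hg) hgi t).trans (h.trans_eq (mul_comm _ _))
  have hcover : 1 ≤ μ {x | g x ≤ t} + μ {x | t ≤ g x} := calc
    1 = μ Set.univ := measure_univ.symm
    _ ≤ μ ({x | g x ≤ t} ∪ {x | t ≤ g x}) := measure_mono fun x _ => le_total (g x) t
    _ ≤ _ := measure_union_le _ _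
  rw [ENNReal.ofReal_sub _ hδ, ENNReal.ofReal_one, tsub_le_iff_right]
  exact hcover.trans (add_le_add_right hmarkov _)

lemma sum_sq_row_add_sq_diag_le {ι : Type*} [Fintype ι] (B : Matrix ι ι ℝ) (hB : ∀ i, B i i ≠ 0) :
    ∑ i, (∑ j, B i j ^ 2 + B i i ^ 2)
      ≤ (∑ i, (1 + (∑ j, B i j ^ 2) / B i i ^ 2)) * ∑ i, B i i ^ 2 := by
  rw [Finset.sum_mul]
  refine Finset.sum_le_sum fun i _ => ?_
  have hBi : 0 < B i i ^ 2 := by have := hB i; positivity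
  have hdiag : B i i ^ 2 ≤ ∑ i, B i i ^ 2 :=
    Finset.single_le_sum (fun j _ => sq_nonneg (B j j)) (Finset.mem_univ i)
  calc ∑ j, B i j ^ 2 + B i i ^ 2 = (1 + (∑ j, B i j ^ 2) / B i i ^ 2) * B i i ^ 2 := by
        rw [add_mul, one_mul, div_mul_cancel₀ _ hBi.ne', add_comm]
    _ ≤ _ := mul_le_mul_of_nonneg_left hdiag (by positivity)

section Estimator

variable {ι : Type*} [Fintype ι] [DecidableEq ι] (B : Matrix ι ι ℝ) (m : ℕ)

lemma integrable_sq_estimator_sub_diag (i : ι) :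
    Integrable (fun x : Fin m → ι → ℝ =>
      ((1 / (m : ℝ)) * (∑ k, x k i * B.mulVec (x k) i) - B i i) ^ 2)
      (Measure.pi fun _ : Fin m => gaussianPi ι) :=
  (((memLp_sum_comp_eval (memLp_mul_mulVec_apply_gaussianPi B i)).const_mul _).sub
    (memLp_const _)).integrable_sq

lemma integral_sum_sq_estimator_sub_diag [NeZero m] :
    ∫ x, ∑ i, ((1 / (m : ℝ)) * (∑ k, x k i * B.mulVec (x k) i) - B i i) ^ 2
      ∂(Measure.pi fun _ : Fin m => gaussianPi ι) = (∑ i, (∑ j, B i j ^ 2 + B i i ^ 2)) / m := by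
  rw [integral_finsetSum _ fun i _ => integrable_sq_estimator_sub_diag B m i, Finset.sum_div]
  refine Finset.sum_congr rfl fun i _ => ?_
  have h := integral_sq_sampleMean_sub (ι := Fin m) (memLp_mul_mulVec_apply_gaussianPi B i)
  rwa [integral_mul_mulVec_apply_gaussianPi, variance_mul_mulVec_apply_gaussianPi,
    Fintype.card_fin, ← one_div] at h

end Estimator

theorem stmt_5_general (n m : ℕ) (B : Matrix (Fin n) (Fin n) ℝ)
    (hB : ∀ i, B i i ≠ 0) (ε δ : ℝ) (hε0 : 0 < ε) (hδ0 : 0 < δ)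
    (hm : (1 / (ε ^ 2 * δ)) * (∑ i, (1 + (∑ j, B i j ^ 2) / B i i ^ 2)) ≤ (m : ℝ))
    (P : Measure (Fin m → Fin n → ℝ))
    (hP : P = Measure.pi fun _ : Fin m => Measure.pi fun _ : Fin n => gaussianReal 0 1) :
    ENNReal.ofReal (1 - δ)
      ≤ P {x | Real.sqrt (∑ i, ((1 / (m : ℝ)) * (∑ k, x k i * B.mulVec (x k) i) - B i i) ^ 2)
                ≤ ε * Real.sqrt (∑ i, B i i ^ 2)} := by
  subst hP
  rcases isEmpty_or_nonempty (Fin n) with hn | hn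
  · simp [hδ0.le]
  set W := ∑ i, (1 + (∑ j, B i j ^ 2) / B i i ^ 2)
  set D := ∑ i, B i i ^ 2
  have hW : 0 < W := Finset.sum_pos (fun i _ => by have := hB i; positivity) Finset.univ_nonempty
  have hD : 0 < D := Finset.sum_pos (fun i _ => by have := hB i; positivity) Finset.univ_nonempty
  have hWm : W ≤ m * (ε ^ 2 * δ) := by rwa [one_div_mul_eq_div, div_le_iff₀ (by positivity)] at hm
  have hm0 : 0 < (m : ℝ) := pos_of_mul_pos_left (hW.trans_le hWm) (by positivity)
  have : NeZero m := ⟨by exact_mod_cast hm0.ne'⟩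
  have hmse := calc
    ∫ x, ∑ i, ((1 / (m : ℝ)) * (∑ k, x k i * B.mulVec (x k) i) - B i i) ^ 2
        ∂(Measure.pi fun _ : Fin m => gaussianPi (Fin n))
      = (∑ i, (∑ j, B i j ^ 2 + B i i ^ 2)) / m := integral_sum_sq_estimator_sub_diag B m
    _ ≤ W * D / m := by gcongr; exact sum_sq_row_add_sq_diag_le B hB
    _ ≤ m * (ε ^ 2 * δ) * D / m := by gcongr
    _ = δ * (ε ^ 2 * D) := by field_simp
  refine (ofReal_one_sub_le_measure_le_of_integral_le (fun x => Finset.sum_nonneg fun i _ =>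
    sq_nonneg _) (integrable_finsetSum _ fun i _ => integrable_sq_estimator_sub_diag B m i)
    (by positivity) hmse).trans (measure_mono fun x hx => ?_)
  calc _ ≤ Real.sqrt (ε ^ 2 * D) := Real.sqrt_le_sqrt hx
    _ = ε * Real.sqrt D := by rw [Real.sqrt_mul (sq_nonneg ε), Real.sqrt_sq hε0.le]

/-- Corollary 2.2: if
`m ≥ (1/(ε²δ)) Σ_i (1 + ‖[B]_{i,:}‖₂²/B_{ii}²)` then the generalized stochastic
diagonal estimator `EST^m := (1/m) Σ_k ω^{(k)} ⊙ (B ω^{(k)})` satisfies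
`P{‖EST^m − diag B‖₂ ≤ ε‖diag B‖₂} ≥ 1 − δ`. -/
theorem stmt_5 (n m : ℕ) (B : Matrix (Fin n) (Fin n) ℝ)
    (hB : ∀ i, B i i ≠ 0) (ε δ : ℝ) (hε0 : 0 < ε) (hε1 : ε < 1) (hδ0 : 0 < δ) (hδ1 : δ < 1)
    (hm : (1 / (ε ^ 2 * δ)) * (∑ i, (1 + (∑ j, B i j ^ 2) / B i i ^ 2)) ≤ (m : ℝ))
    (P : Measure (Fin m → Fin n → ℝ))
    (hP : P = Measure.pi fun _ : Fin m => Measure.pi fun _ : Fin n => gaussianReal 0 1) :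
    ENNReal.ofReal (1 - δ)
      ≤ P {x | Real.sqrt (∑ i, ((1 / (m : ℝ)) * (∑ k, x k i * B.mulVec (x k) i) - B i i) ^ 2)
                ≤ ε * Real.sqrt (∑ i, B i i ^ 2)} :=
  stmt_5_general n m B hB ε δ hε0 hδ0 hm P hP
end
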